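/- Let 0 < c < d and ℓ = (d - c)/d. The piecewise map F defined on the closed right half-plane by F(z) = (4z + iℓ(z - conj z)²)/(4 + 2iℓ(z - conj z)) on G₁ = {x + iy : 0 ≤ y ≤ 1, 0 ≤ x ≤ d(1 - ℓy)}, F(z) = z - (i(d - c)/2)(z - conj z) on G₂ = {x + iy : 0 ≤ y ≤ 1, x ≥ d(1 - ℓy)}, F(z) = ((2 - ℓ)z + ℓ·conj z)/(2(1 - ℓ)) on G₃ = {x + iy : y ≥ 1, 0 ≤ x ≤ c}, F(z) = z + (d - c) on G₄ = {x + iy : y ≥ 1, x ≥ c}, and F(z) = z on G₅ = {x + iy : y ≤ 0, x ≥ 0}, is a bijection of the closed right half-plane {z : Re z ≥ 0} onto itself. -/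

import Mathlib

open Complex ComplexConjugate

/-! The map preserves imaginary parts, and on the horizontal line `Im z = y` it acts on
`Re z = x ≥ 0` as a continuous piecewise-linear increasing map: slope `1 / s` up to
`x = d s` (which goes to `d`), then translation by `(1 - s) d`, where `s` is `1`, `1 - ℓ y`
or `1 - ℓ` according as `y ≤ 0`, `0 < y ≤ 1` or `y > 1` (for `y > 1` the break point
`d (1 - ℓ) = c` is the boundary between `G₃` and `G₄`). Such a map is a bijection of
`[0, ∞)`, with the inverse `u ↦ s u` up to `d` and translation by `-(1 - s) d` beyond. -/

/-- The piecewise map `f₁` of the paper (formula (2.1)) on the closed right half-plane: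
the trapezoid formula on `G₁`, the shear on `G₂`, the stretch on `G₃`, the translation
on `G₄` and the identity on `G₅`. -/
noncomputable def trapMap (ℓ c d : ℝ) (z : ℂ) : ℂ :=
  if z.im ≤ 0 then z
  else if z.im ≤ 1 then
    (if z.re ≤ d * (1 - ℓ * z.im) then
      (4 * z + I * (ℓ : ℂ) * (z - conj z) ^ 2) / (4 + 2 * I * (ℓ : ℂ) * (z - conj z))
     else z - (I * ((d : ℂ) - (c : ℂ)) / 2) * (z - conj z))
  else
    (if z.re ≤ c then ((2 - (ℓ : ℂ)) * z + (ℓ : ℂ) * conj z) / (2 * (1 - (ℓ : ℂ)))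
     else z + ((d : ℂ) - (c : ℂ)))

open Set

noncomputable def kinkMap (s d x : ℝ) : ℝ :=
  if x ≤ d * s then x / s else x + (1 - s) * d

noncomputable def kinkMapInv (s d u : ℝ) : ℝ :=
  if u ≤ d then u * s else u - (1 - s) * d

section kink
variable {s d : ℝ}

theorem invOn_kinkMap (hs : 0 < s) :
    InvOn (kinkMapInv s d) (kinkMap s d) univ univ := by
  constructor
  · intro x _
    unfold kinkMap kinkMapInv
    by_cases hx : x ≤ d * s
    · have : x / s ≤ d := (div_le_iff₀ hs).mpr hx
      simp [hx, this, hs.ne']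
    · have : ¬ x + (1 - s) * d ≤ d := by linarith
      simp [hx, this]
  · intro u _
    unfold kinkMap kinkMapInv
    by_cases hu : u ≤ d
    · have : u * s ≤ d * s := mul_le_mul_of_nonneg_right hu hs.le
      simp [hu, this, hs.ne']
    · have : ¬ u - (1 - s) * d ≤ d * s := by linarith
      simp [hu, this]

theorem kinkMap_nonneg (hs : 0 < s) (hd : 0 ≤ d) {x : ℝ} (hx : 0 ≤ x) :
    0 ≤ kinkMap s d x := by
  unfold kinkMap
  split_ifs
  · positivity
  · nlinarith

theorem kinkMapInv_nonneg (hs : 0 < s) (hd : 0 ≤ d) {u : ℝ} (hu : 0 ≤ u) :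
    0 ≤ kinkMapInv s d u := by
  unfold kinkMapInv
  split_ifs
  · positivity
  · nlinarith

theorem bijOn_kinkMap (hs : 0 < s) (hd : 0 ≤ d) : BijOn (kinkMap s d) (Ici 0) (Ici 0) :=
  ((invOn_kinkMap hs).mono (subset_univ _) (subset_univ _)).bijOn
    (fun _ => kinkMap_nonneg hs hd) (fun _ => kinkMapInv_nonneg hs hd)

end kink

theorem bijOn_of_bijOn_horizontal_lines {g : ℝ → ℝ → ℝ} {s t : Set ℝ}
    (hg : ∀ y, BijOn (g y) s t) :
    BijOn (fun z : ℂ => ⟨g z.im z.re, z.im⟩) (re ⁻¹' s) (re ⁻¹' t) := by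
  refine ⟨fun z hz => (hg z.im).mapsTo hz, fun z hz w hw h => ?_, fun w hw => ?_⟩
  · have him : z.im = w.im := by simpa using congrArg Complex.im h
    have hre : g z.im z.re = g z.im w.re := by simpa [him] using congrArg re h
    exact Complex.ext ((hg z.im).injOn hz hw hre) him
  · obtain ⟨x, hx, hgx⟩ := (hg w.im).surjOn hw
    exact ⟨⟨x, w.im⟩, hx, Complex.ext hgx rfl⟩

noncomputable def trapSlope (ℓ y : ℝ) : ℝ :=
  if y ≤ 0 then 1 else if y ≤ 1 then 1 - ℓ * y else 1 - ℓ

theorem trapSlope_pos {ℓ : ℝ} (hℓ : ℓ < 1) (y : ℝ) : 0 < trapSlope ℓ y := by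
  unfold trapSlope
  split_ifs
  · exact one_pos
  · rcases le_or_gt 0 ℓ with h | h <;> nlinarith
  · linarith

theorem trapMap_eq_kinkMap {ℓ c d : ℝ} (hℓ : ℓ < 1) (hℓd : ℓ * d = d - c) (z : ℂ) :
    trapMap ℓ c d z = ⟨kinkMap (trapSlope ℓ z.im) d z.re, z.im⟩ := by
  have hs := trapSlope_pos hℓ z.im
  have hℓd' : (ℓ : ℂ) * d = d - c := by exact_mod_cast hℓd
  obtain ⟨x, y⟩ := z
  dsimp only at hs ⊢
  rcases le_or_gt y 0 with h0 | h0
  · simp [trapMap, kinkMap, trapSlope, h0]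
  rcases le_or_gt y 1 with h1 | h1
  · simp only [trapSlope, if_neg h0.not_ge, if_pos h1] at hs
    simp only [trapMap, kinkMap, trapSlope, if_neg h0.not_ge, if_pos h1]
    simp only [mk_eq_add_mul_I, map_add, map_mul, conj_ofReal, conj_I]
    split_ifs
    · set a : ℝ := x / (1 - ℓ * y)
      have ha : (a : ℂ) * (1 - ℓ * y) = x := by exact_mod_cast div_mul_cancel₀ x hs.ne'
      have hden : 4 + 2 * I * ℓ * (x + y * I - (x + y * -I)) = (4 * (1 - ℓ * y) : ℂ) := by
        linear_combination (4 * ℓ * y : ℂ) * I_sq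
      rw [hden, div_eq_iff (by exact_mod_cast (by positivity : (0 : ℝ) < 4 * (1 - ℓ * y)).ne')]
      linear_combination (4 * y ^ 2 * ℓ * I) * I_sq - 4 * ha
    · push_cast
      linear_combination (y * (c - d) : ℂ) * I_sq - y * hℓd'
  · simp only [trapSlope, if_neg h0.not_ge, if_neg h1.not_ge] at hs
    have hc : d * (1 - ℓ) = c := by linarith
    simp only [trapMap, kinkMap, trapSlope, if_neg h0.not_ge, if_neg h1.not_ge, hc]
    simp only [mk_eq_add_mul_I, map_add, map_mul, conj_ofReal, conj_I]
    split_ifs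
    · set a : ℝ := x / (1 - ℓ)
      have ha : (a : ℂ) * (1 - ℓ) = x := by exact_mod_cast div_mul_cancel₀ x hs.ne'
      rw [div_eq_iff (by exact_mod_cast (by positivity : (0 : ℝ) < 2 * (1 - ℓ)).ne')]
      linear_combination -2 * ha
    · push_cast
      linear_combination -hℓd'

/-- The piecewise map `f₁` is a bijection of the closed right half-plane onto itself. -/
theorem stmt_6 (c d : ℝ) (hc : 0 < c) (hcd : c < d) (ℓ : ℝ) (hℓ : ℓ = (d - c) / d) :
    Set.BijOn (trapMap ℓ c d) {z : ℂ | 0 ≤ z.re} {z : ℂ | 0 ≤ z.re} := by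
  have hd : 0 < d := hc.trans hcd
  have hℓ1 : ℓ < 1 := by rw [hℓ, div_lt_one hd]; linarith
  have hℓd : ℓ * d = d - c := by rw [hℓ, div_mul_cancel₀ _ hd.ne']
  rw [funext (trapMap_eq_kinkMap hℓ1 hℓd)]
  exact bijOn_of_bijOn_horizontal_lines fun y => bijOn_kinkMap (trapSlope_pos hℓ1 y) hd.le
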